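/- Let $A$ and $p$ be $n \times n$ matrices over a field of characteristic zero such that $Ap - pA = p$. Then $p$ is nilpotent. -/
import Mathlib

/-- If `A p - p A = p` for `n × n` matrices over a field of characteristic zero,
then `p` is nilpotent. -/
theorem stmt_7 {n : ℕ} {K : Type*} [Field K] [CharZero K]
    (A p : Matrix (Fin n) (Fin n) K) (h : A * p - p * A = p) :
    IsNilpotent p := by
  by_contra hnp
  have hpow : ∀ k : ℕ, p ^ (k + 1) ≠ 0 := fun k hk => hnp ⟨k + 1, hk⟩
  set f : Module.End K (Matrix (Fin n) (Fin n) K) :=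
    LinearMap.mulLeft K A - LinearMap.mulRight K A with hf
  have key : ∀ k : ℕ, f (p ^ (k + 1)) = ((k : K) + 1) • p ^ (k + 1) := by
    intro k
    induction k with
    | zero => simp [hf, LinearMap.mulLeft_apply, LinearMap.mulRight_apply, pow_one, h]
    | succ k ih =>
      have ih' : A * p ^ (k + 1) - p ^ (k + 1) * A = ((k : K) + 1) • p ^ (k + 1) := ih
      have h1 : A * p - p * A = p := h
      simp only [hf, LinearMap.sub_apply, LinearMap.mulLeft_apply,
        LinearMap.mulRight_apply] at ih' ⊢
      have : A * p ^ (k + 2) - p ^ (k + 2) * A =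
          (A * p ^ (k + 1) - p ^ (k + 1) * A) * p + p ^ (k + 1) * (A * p - p * A) := by
        rw [show p ^ (k + 2) = p ^ (k + 1) * p from pow_succ p (k + 1)]
        noncomm_ring
      rw [this, ih', h1, show p ^ (k + 1 + 1) = p ^ (k + 1) * p from pow_succ p (k + 1),
        smul_mul_assoc]
      push_cast
      module
  have heig : ∀ k : ℕ, f.HasEigenvector ((k : K) + 1) (p ^ (k + 1)) := by
    intro k
    refine ⟨Module.End.mem_eigenspace_iff.mpr (key k), hpow k⟩
  have hinj : Function.Injective (fun k : ℕ => (k : K) + 1) := by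
    intro a b hab
    simpa using hab
  have hli := f.eigenvectors_linearIndependent' (fun k : ℕ => (k : K) + 1) hinj
    (fun k => p ^ (k + 1)) heig
  exact Module.Finite.not_linearIndependent_of_infinite _ hli
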